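/- Let Z be an n-dimensional naturally graded p-filiform complex Zinbiel algebra of first type (with the adapted basis normalized as in the preceding structure results). Then f_i ∘ f_j = 0 for all 1 ≤ i ≤ s_1 and all s_{n−p−1}+1 ≤ j ≤ s_1. -/

import Mathlib

open Module Submodule

/-- The Zinbiel identity for a bilinear operation `mul` on a complex vector space:
`(x∘y)∘z = x∘(y∘z) + x∘(z∘y)`. -/
def IsZinbiel {Z : Type*} [AddCommGroup Z] [Module ℂ Z] (mul : Z →ₗ[ℂ] Z →ₗ[ℂ] Z) : Prop :=
  ∀ x y z : Z, mul (mul x y) z = mul x (mul y z) + mul x (mul z y)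
/-- The square `Z ∘ Z` of the algebra. -/
def algSq {Z : Type*} [AddCommGroup Z] [Module ℂ Z] (mul : Z →ₗ[ℂ] Z →ₗ[ℂ] Z) :
    Submodule ℂ Z :=
  Submodule.span ℂ {z | ∃ x y, z = mul x y}
/-- `C(Z) = (n-p, 1, …, 1)` (`p`-filiformity) expressed via the left multiplication
operators: for every `x ∉ Z²` the nilpotent operator `L_x` satisfies `L_x^(n-p) = 0`
and has rank at most `n-p-1`; this says exactly that the Jordan type of every `L_x`
is lexicographically at most `(n-p, 1, …, 1)`. -/
def CharSeqMax {Z : Type*} [AddCommGroup Z] [Module ℂ Z]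
    (mul : Z →ₗ[ℂ] Z →ₗ[ℂ] Z) (n p : ℕ) : Prop :=
  ∀ x : Z, x ∉ algSq mul →
    ((mul x : Module.End ℂ Z) ^ (n - p) = 0) ∧
      Module.finrank ℂ (LinearMap.range (mul x)) ≤ n - p - 1
/-- The adapted family `e_1, …, e_m, f_1, …, f_p` indexed by `Fin m ⊕ Fin p`. -/
def adaptedFam {Z : Type*} (m p : ℕ) (e f : ℕ → Z) : Fin m ⊕ Fin p → Z :=
  Sum.elim (fun i => e ((i : ℕ) + 1)) (fun j => f ((j : ℕ) + 1))
/-- `psum s k = s 1 + s 2 + ⋯ + s k`. -/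
def psum (s : ℕ → ℕ) (k : ℕ) : ℕ := ∑ j ∈ Finset.Icc 1 k, s j

/-!
Let `R` be right multiplication by `e₁`. Since `e₁ ∘ f_l = 0`, the Zinbiel identity gives
`R (x ∘ f_l) = x ∘ R f_l`, and the normalization moves `f_j` (for `j > s_{m-1}`, `m = n - p`)
along `f_j ↦ f_{s_1 + j} ↦ ⋯` until it is killed within `m - 2` steps; hence
`R^{m-2} (f_i ∘ f_j) = 0`. On the other hand `e_k ∘ e₁ = k e_{k+1}`, so
`R^{m-2} (γ_{ij} e₂) = γ_{ij} (m-1)! e_m`, which forces `γ_{ij} = 0`. When `m = 1` the product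
already lies in the zero component `Z₂`.
-/

theorem psum_zero (s : ℕ → ℕ) : psum s 0 = 0 := by
  simp [psum]

theorem psum_one (s : ℕ → ℕ) : psum s 1 = s 1 := by
  simp [psum]

theorem psum_succ (s : ℕ → ℕ) (t : ℕ) : psum s (t + 1) = psum s t + s (t + 1) :=
  Finset.sum_Icc_succ_top (by omega) s

theorem psum_mono (s : ℕ → ℕ) : Monotone (psum s) := fun _ _ h =>
  Finset.sum_le_sum_of_subset (Finset.Icc_subset_Icc le_rfl h)

theorem psum_pred_add_le {s : ℕ → ℕ} {t m j : ℕ} (ht : 1 ≤ t) (htm : t ≤ m) (hj : j ≤ s t) :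
    psum s (t - 1) + j ≤ psum s m := by
  have hsucc := psum_succ s (t - 1)
  rw [Nat.sub_add_cancel ht] at hsucc
  have := psum_mono s htm
  omega

namespace IsZinbiel

variable {Z : Type*} [AddCommGroup Z] [Module ℂ Z] {mul : Z →ₗ[ℂ] Z →ₗ[ℂ] Z}

theorem mul_mul_of_mul_eq_zero (hzin : IsZinbiel mul) (x : Z) {y z : Z} (h : mul z y = 0) :
    mul (mul x y) z = mul x (mul y z) := by
  rw [hzin, h, map_zero, add_zero]

section Chain

variable {e : ℕ → Z} {N : ℕ}

theorem chain_mul_first (hzin : IsZinbiel mul)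
    (hee : ∀ i, 1 ≤ i → i ≤ N → mul (e 1) (e i) = e (i + 1)) {k : ℕ} (hk : 1 ≤ k) (hkN : k ≤ N) :
    mul (e k) (e 1) = (k : ℂ) • e (k + 1) := by
  induction k, hk using Nat.le_induction with
  | base => simpa using hee 1 le_rfl hkN
  | succ k hk ih =>
    rw [← hee k hk (by omega), hzin, ih (by omega), map_smul, hee k hk (by omega),
      hee (k + 1) (by omega) hkN]
    push_cast
    module

theorem flip_pow_apply_two (hzin : IsZinbiel mul)
    (hee : ∀ i, 1 ≤ i → i ≤ N → mul (e 1) (e i) = e (i + 1)) {d : ℕ} (hd : d + 1 ≤ N) :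
    (mul.flip (e 1) ^ d) (e 2) = ((d + 1).factorial : ℂ) • e (d + 2) := by
  induction d with
  | zero => simp
  | succ d ih =>
    rw [pow_succ', Module.End.mul_apply, ih (by omega), map_smul, LinearMap.flip_apply,
      chain_mul_first hzin hee (by omega) (by omega), smul_smul, Nat.factorial_succ (d + 1)]
    push_cast
    ring_nf

end Chain

theorem flip_pow_mul_normalized_eq_zero (hzin : IsZinbiel mul) {e f : ℕ → Z} {s : ℕ → ℕ} {m : ℕ}
    (hef : ∀ l, 1 ≤ l → l ≤ psum s m → mul (e 1) (f l) = 0)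
    (hnorm : ∀ t i, 1 ≤ t → t ≤ m - 1 →
      (1 ≤ i → i ≤ s (t + 1) → mul (f (psum s (t - 1) + i)) (e 1) = f (psum s t + i)) ∧
      (s (t + 1) + 1 ≤ i → i ≤ s t → mul (f (psum s (t - 1) + i)) (e 1) = 0))
    (x : Z) {j : ℕ} (hj : s (m - 1) < j) :
    ∀ d t, 1 ≤ t → t + d = m - 1 → j ≤ s t →
      (mul.flip (e 1) ^ d) (mul x (f (psum s (t - 1) + j))) = 0 := by
  intro d
  induction d with
  | zero =>
    intro t _ htd hjt
    rw [add_zero] at htd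
    subst htd
    omega
  | succ d ih =>
    intro t ht htd hjt
    rw [pow_succ, Module.End.mul_apply, LinearMap.flip_apply,
      hzin.mul_mul_of_mul_eq_zero x (hef _ (by omega) (psum_pred_add_le ht (by omega) hjt))]
    rcases Nat.lt_or_ge (s (t + 1)) j with hkill | hmove
    · rw [(hnorm t j ht (by omega)).2 (by omega) hjt, map_zero, map_zero]
    · rw [(hnorm t j ht (by omega)).1 (by omega) hmove]
      simpa using ih (t + 1) (by omega) (by omega) hmove

end IsZinbiel

theorem graded_p_filiform_ff_vanishing_general
    {Z : Type*} [AddCommGroup Z] [Module ℂ Z]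
    (mul : Z →ₗ[ℂ] Z →ₗ[ℂ] Z) (hzin : IsZinbiel mul)
    (n p : ℕ) (hpn : p < n)
    (e f : ℕ → Z)
    -- `{e_1, …, e_{n-p}, f_1, …, f_p}` is a basis of the `n`-dimensional algebra `Z`
    (hli : LinearIndependent ℂ (adaptedFam (n - p) p e f))
    -- the basis is adapted of first type: `e_1 ∘ e_i = e_{i+1}`, `e_1 ∘ e_{n-p} = 0`,
    -- `e_1 ∘ f_j = 0`
    (hee : ∀ i, 1 ≤ i → i ≤ n - p - 1 → mul (e 1) (e i) = e (i + 1))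
    (hef : ∀ j, 1 ≤ j → j ≤ p → mul (e 1) (f j) = 0)
    -- the natural gradation `Z = Z_1 ⊕ ⋯ ⊕ Z_{n-p}` : `W i` is the `i`-th component,
    -- the gradation is multiplicative and generated in degree one
    -- (`Z_{i+1} = Z_1 ∘ Z_i`, coming from `Z_i = Z^i/Z^{i+1}`), and `e_i ∈ Z_i`
    (W : ℕ → Submodule ℂ Z)
    (hWhigh : ∀ i, n - p < i → W i = ⊥)
    (hWmul : ∀ i j, ∀ x ∈ W i, ∀ y ∈ W j, mul x y ∈ W (i + j))
    -- `s_i = dim Z_i - 1` and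
    -- `Z_i = ⟨e_i, f_{s_1+⋯+s_{i-1}+1}, …, f_{s_1+⋯+s_i}⟩` for `1 ≤ i ≤ n-p`
    (s : ℕ → ℕ)
    (hsum : psum s (n - p) = p)
    (hWspan : ∀ i, 1 ≤ i → i ≤ n - p →
      W i = Submodule.span ℂ (insert (e i) (f '' Set.Icc (psum s (i - 1) + 1) (psum s i))))
    -- the basis is normalized so that `f_{s_1+⋯+s_{t-1}+i} ∘ e_1 = f_{s_1+⋯+s_t+i}`
    -- for `1 ≤ i ≤ s_{t+1}` and `= 0` for `s_{t+1}+1 ≤ i ≤ s_t`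
    (hnorm : ∀ t i, 1 ≤ t → t ≤ n - p - 1 →
      (1 ≤ i → i ≤ s (t + 1) → mul (f (psum s (t - 1) + i)) (e 1) = f (psum s t + i)) ∧
      (s (t + 1) + 1 ≤ i → i ≤ s t → mul (f (psum s (t - 1) + i)) (e 1) = 0))
    -- the scalars `γ_{ij}` with `f_i ∘ f_j = γ_{ij} e_2 = -f_j ∘ f_i` for `1 ≤ i, j ≤ s_1`
    (γ : ℕ → ℕ → ℂ)
    (hγ : ∀ i j, 1 ≤ i → i ≤ s 1 → 1 ≤ j → j ≤ s 1 → mul (f i) (f j) = γ i j • e 2)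
    :
    ∀ i j, 1 ≤ i → i ≤ s 1 → s (n - p - 1) + 1 ≤ j → j ≤ s 1 →
      mul (f i) (f j) = 0 := by
  intro i j hi his hjlo hjs
  rcases Nat.lt_or_ge (n - p) 2 with hm | hm
  · have hfW1 : ∀ k, 1 ≤ k → k ≤ s 1 → f k ∈ W 1 := fun k hk hks => by
      rw [hWspan 1 le_rfl (by omega)]
      exact subset_span (Set.mem_insert_of_mem _ ⟨k, by simp [psum_zero, psum_one, hk, hks], rfl⟩)
    simpa [hWhigh 2 (by omega)] using
      hWmul 1 1 _ (hfW1 i hi his) _ (hfW1 j (by omega) hjs)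
  · have hkill := hzin.flip_pow_mul_normalized_eq_zero (by rwa [hsum]) hnorm (f i) hjlo
      (n - p - 2) 1 le_rfl (by omega) hjs
    rw [Nat.sub_self, psum_zero, zero_add, hγ i j hi his (by omega) hjs, map_smul,
      hzin.flip_pow_apply_two hee (by omega), smul_smul] at hkill
    have hem : e (n - p - 2 + 2) ≠ 0 := by
      simpa [adaptedFam, show n - p - 2 + 2 = n - p - 1 + 1 by omega] using
        hli.ne_zero (Sum.inl ⟨n - p - 1, by omega⟩)
    have hγij : γ i j = 0 := by
      simpa [hem, Nat.factorial_ne_zero] using hkill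
    rw [hγ i j hi his (by omega) hjs, hγij, zero_smul]

/-- Lemma: in the normalized adapted basis, `f_i ∘ f_j = 0` for `1 ≤ i ≤ s_1` and
`s_{n-p-1}+1 ≤ j ≤ s_1`. -/
theorem graded_p_filiform_ff_vanishing
    {Z : Type*} [AddCommGroup Z] [Module ℂ Z]
    (mul : Z →ₗ[ℂ] Z →ₗ[ℂ] Z) (hzin : IsZinbiel mul)
    (n p : ℕ) (hpn : p < n)
    (e f : ℕ → Z)
    -- `{e_1, …, e_{n-p}, f_1, …, f_p}` is a basis of the `n`-dimensional algebra `Z`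
    (hli : LinearIndependent ℂ (adaptedFam (n - p) p e f))
    (hsp : Submodule.span ℂ (Set.range (adaptedFam (n - p) p e f)) = ⊤)
    -- the basis is adapted of first type: `e_1 ∘ e_i = e_{i+1}`, `e_1 ∘ e_{n-p} = 0`,
    -- `e_1 ∘ f_j = 0`
    (hee : ∀ i, 1 ≤ i → i ≤ n - p - 1 → mul (e 1) (e i) = e (i + 1))
    (hetop : mul (e 1) (e (n - p)) = 0)
    (hef : ∀ j, 1 ≤ j → j ≤ p → mul (e 1) (f j) = 0)
    -- the natural gradation `Z = Z_1 ⊕ ⋯ ⊕ Z_{n-p}` : `W i` is the `i`-th component,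
    -- the gradation is multiplicative and generated in degree one
    -- (`Z_{i+1} = Z_1 ∘ Z_i`, coming from `Z_i = Z^i/Z^{i+1}`), and `e_i ∈ Z_i`
    (W : ℕ → Submodule ℂ Z)
    (hW0 : W 0 = ⊥)
    (hWhigh : ∀ i, n - p < i → W i = ⊥)
    (hWint : DirectSum.IsInternal W)
    (hWmul : ∀ i j, ∀ x ∈ W i, ∀ y ∈ W j, mul x y ∈ W (i + j))
    (hWgen : ∀ i, 1 ≤ i → W (i + 1) = Submodule.span ℂ {z | ∃ x ∈ W 1, ∃ y ∈ W i, z = mul x y})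
    (heW : ∀ i, 1 ≤ i → i ≤ n - p → e i ∈ W i)
    -- `Z` is `p`-filiform with characteristic vector `e_1 ∉ Z²`
    (hfil : CharSeqMax mul n p)
    (he1sq : e 1 ∉ algSq mul)
    -- `s_i = dim Z_i - 1` and
    -- `Z_i = ⟨e_i, f_{s_1+⋯+s_{i-1}+1}, …, f_{s_1+⋯+s_i}⟩` for `1 ≤ i ≤ n-p`
    (s : ℕ → ℕ) (hs0 : s 0 = 0) (hshigh : ∀ i, n - p < i → s i = 0)
    (hsum : psum s (n - p) = p)
    (hWspan : ∀ i, 1 ≤ i → i ≤ n - p →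
      W i = Submodule.span ℂ (insert (e i) (f '' Set.Icc (psum s (i - 1) + 1) (psum s i))))
    -- the basis is normalized so that `f_{s_1+⋯+s_{t-1}+i} ∘ e_1 = f_{s_1+⋯+s_t+i}`
    -- for `1 ≤ i ≤ s_{t+1}` and `= 0` for `s_{t+1}+1 ≤ i ≤ s_t`
    (hnorm : ∀ t i, 1 ≤ t → t ≤ n - p - 1 →
      (1 ≤ i → i ≤ s (t + 1) → mul (f (psum s (t - 1) + i)) (e 1) = f (psum s t + i)) ∧
      (s (t + 1) + 1 ≤ i → i ≤ s t → mul (f (psum s (t - 1) + i)) (e 1) = 0))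
    -- the scalars `γ_{ij}` with `f_i ∘ f_j = γ_{ij} e_2 = -f_j ∘ f_i` for `1 ≤ i, j ≤ s_1`
    (γ : ℕ → ℕ → ℂ)
    (hγ : ∀ i j, 1 ≤ i → i ≤ s 1 → 1 ≤ j → j ≤ s 1 → mul (f i) (f j) = γ i j • e 2)
    (hγanti : ∀ i j, 1 ≤ i → i ≤ s 1 → 1 ≤ j → j ≤ s 1 → γ i j = -γ j i)
    :
    ∀ i j, 1 ≤ i → i ≤ s 1 → s (n - p - 1) + 1 ≤ j → j ≤ s 1 →
      mul (f i) (f j) = 0 :=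
  graded_p_filiform_ff_vanishing_general mul hzin n p hpn e f hli hee hef W hWhigh hWmul s hsum
    hWspan hnorm γ hγ
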